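/- arXiv:2408.07787 — 3 statements merged into one kernel-verified Lean document; each statement's English description precedes it below -/
import Mathlib

section
/- Let n, m, k be natural numbers with m ≤ n and 1 ≤ k ≤ 2^n, let Y be a finite type with exactly 2^m elements, and let T : GF(2^n) → Y be a balanced function, i.e. every fiber T⁻¹(y) has exactly 2^{n−m} elements. Let x₁, …, x_k be k distinct elements of GF(2^n) and y₁, …, y_k arbitrary elements of Y. If a is sampled uniformly at random from GF(2^n)^k, then the probability that T(p_a(x_i)) = y_i holds simultaneously for all i = 1, …, k equals (2^{−m})^k; equivalently, the number of tuples a ∈ GF(2^n)^k satisfying all k equations is exactly 2^{(n−m)k}. In other words, the truncated family {T ∘ p_a : a ∈ GF(2^n)^k} is strongly k-universal from GF(2^n) to Y. -/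
/-! Evaluation of `a₀ + a₁ X + ⋯ + a_{k-1} X^{k-1}` at `k` distinct points is multiplication by an
invertible Vandermonde matrix, so `a ↦ (p_a(x_i))_i` is a bijection of `GF(2^n)^k`. The solutions of
`T (p_a(x_i)) = y_i` therefore correspond to tuples of points in the fibres `T⁻¹(y_i)`, and there are
`(2^{n-m})^k` of them among the `(|Y| ⋅ 2^{n-m})^k` tuples. -/

open Function
open scoped Matrix

theorem Nat.card_eq_card_mul_of_forall_card_fiber {α β : Type*} [Finite α] [Fintype β]
    (f : α → β) {c : ℕ} (hf : ∀ b, Nat.card {a // f a = b} = c) :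
    Nat.card α = Nat.card β * c := by
  rw [← Nat.card_congr (Equiv.sigmaFiberEquiv f), Nat.card_sigma]
  simp only [hf, Finset.sum_const, Finset.card_univ, smul_eq_mul, Nat.card_eq_fintype_card]

theorem Nat.card_subtype_forall_comp_of_bijective {ι α β Y : Type*} [Fintype ι]
    {e : α → ι → β} (he : Bijective e) (T : β → Y) (y : ι → Y) :
    Nat.card {a // ∀ i, T (e a i) = y i} = ∏ i, Nat.card {b // T b = y i} := by
  rw [← Nat.card_pi]
  exact Nat.card_congr
    ((Equiv.subtypeEquiv (Equiv.ofBijective e he) fun _ => Iff.rfl).trans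
      (Equiv.subtypePiEquivPi (p := fun i b => T b = y i)))

theorem Matrix.vandermonde_mulVec_apply {R : Type*} [CommRing R] {n : ℕ} (v a : Fin n → R)
    (i : Fin n) : (vandermonde v *ᵥ a) i = ∑ j, a j * v i ^ (j : ℕ) := by
  simp only [mulVec, dotProduct, vandermonde_apply, mul_comm]

theorem Matrix.bijective_mulVec_vandermonde {K : Type*} [Field K] {n : ℕ} {v : Fin n → K}
    (hv : Injective v) : Bijective (vandermonde v).mulVec := by
  have hunit : IsUnit (vandermonde v) := by
    rw [isUnit_iff_isUnit_det]
    exact (det_vandermonde_ne_zero_iff.mpr hv).isUnit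
  exact ⟨mulVec_injective_iff_isUnit.mpr hunit, mulVec_surjective_iff_isUnit.mpr hunit⟩

theorem ENNReal.pow_div_mul_pow_right (a : ENNReal) {c : ENNReal} (hc₀ : c ≠ 0) (hc : c ≠ ⊤)
    (k : ℕ) : c ^ k / (a * c) ^ k = (1 / a) ^ k := calc
  c ^ k / (a * c) ^ k = 1 * c ^ k / (a ^ k * c ^ k) := by rw [one_mul, mul_pow]
  _ = (1 / a) ^ k := by
    rw [ENNReal.mul_div_mul_right _ _ (pow_ne_zero k hc₀) (pow_ne_top hc), one_div, one_div, ENNReal.inv_pow]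

theorem stmt_7_general (n m k : ℕ)
    (Y : Type) [Fintype Y] (hY : Fintype.card Y = 2 ^ m)
    (T : GaloisField 2 n → Y)
    (hT : ∀ y : Y, Nat.card {z : GaloisField 2 n // T z = y} = 2 ^ (n - m))
    (x : Fin k → GaloisField 2 n) (hx : Function.Injective x)
    (y : Fin k → Y) :
    letI : Fintype (GaloisField 2 n) := Fintype.ofFinite _
    (PMF.uniformOfFintype (Fin k → GaloisField 2 n)).toOuterMeasure
        {a | ∀ i : Fin k, T (∑ j : Fin k, a j * x i ^ (j : ℕ)) = y i}
      = (1 / (2 ^ m : ENNReal)) ^ k ∧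
    Nat.card {a : Fin k → GaloisField 2 n //
        ∀ i : Fin k, T (∑ j : Fin k, a j * x i ^ (j : ℕ)) = y i}
      = 2 ^ ((n - m) * k) := by
  let : Fintype (GaloisField 2 n) := Fintype.ofFinite _
  have hcard : Nat.card (GaloisField 2 n) = 2 ^ m * 2 ^ (n - m) := by
    rw [Nat.card_eq_card_mul_of_forall_card_fiber T hT, Nat.card_eq_fintype_card, hY]
  have hcount : Nat.card {a : Fin k → GaloisField 2 n //
      ∀ i, T (∑ j : Fin k, a j * x i ^ (j : ℕ)) = y i} = 2 ^ ((n - m) * k) := by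
    simp only [← Matrix.vandermonde_mulVec_apply,
      Nat.card_subtype_forall_comp_of_bijective (Matrix.bijective_mulVec_vandermonde hx), hT,
      Finset.prod_const, Finset.card_univ, Fintype.card_fin, pow_mul]
  refine ⟨?_, hcount⟩
  classical
  rw [PMF.toOuterMeasure_uniformOfFintype_apply, ← Nat.card_eq_fintype_card,
    ← Nat.card_eq_fintype_card, Set.coe_ofPred, hcount, Nat.card_pi]
  simp only [hcard, Finset.prod_const, Finset.card_univ, Fintype.card_fin, pow_mul]
  push_cast
  exact ENNReal.pow_div_mul_pow_right _ (by positivity) (by simp) k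

theorem stmt_7 (n m k : ℕ) (hmn : m ≤ n) (hk : 1 ≤ k) (hk2 : k ≤ 2 ^ n)
    (Y : Type) [Fintype Y] (hY : Fintype.card Y = 2 ^ m)
    (T : GaloisField 2 n → Y)
    (hT : ∀ y : Y, Nat.card {z : GaloisField 2 n // T z = y} = 2 ^ (n - m))
    (x : Fin k → GaloisField 2 n) (hx : Function.Injective x)
    (y : Fin k → Y) :
    letI : Fintype (GaloisField 2 n) := Fintype.ofFinite _
    (PMF.uniformOfFintype (Fin k → GaloisField 2 n)).toOuterMeasure
        {a | ∀ i : Fin k, T (∑ j : Fin k, a j * x i ^ (j : ℕ)) = y i}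
      = (1 / (2 ^ m : ENNReal)) ^ k ∧
    Nat.card {a : Fin k → GaloisField 2 n //
        ∀ i : Fin k, T (∑ j : Fin k, a j * x i ^ (j : ℕ)) = y i}
      = 2 ^ ((n - m) * k) :=
  stmt_7_general n m k Y hY T hT x hx y
end

section
/- Let n, m, k be natural numbers with m ≤ n and 1 ≤ k ≤ 2^n, let Y be a finite type with exactly 2^m elements, and let T : GF(2^n) → Y be a balanced function (every fiber has exactly 2^{n−m} elements). Let x₁, …, x_k be k distinct elements of GF(2^n). Then the pushforward of the uniform distribution on GF(2^n)^k under the map a ↦ (T(p_a(x₁)), …, T(p_a(x_k))) is the uniform distribution on Y^k; i.e. the random variables T(p_a(x₁)), …, T(p_a(x_k)) are jointly uniform, hence each uniform on Y and mutually independent. -/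
open Finset
open scoped ENNReal

lemma map_unif_of_const_fibers {α β : Type*} [Fintype α] [Fintype β] [Nonempty α] [Nonempty β]
    [DecidableEq β] (f : α → β) (c : ℕ) (hc : ∀ b, Fintype.card {a // f a = b} = c) :
    PMF.map f (PMF.uniformOfFintype α) = PMF.uniformOfFintype β := by
  have hcard : Fintype.card α = c * Fintype.card β := by
    rw [← Fintype.card_congr (Equiv.sigmaFiberEquiv f), Fintype.card_sigma]
    simp [hc, mul_comm]
  have hc0 : c ≠ 0 := by
    obtain ⟨a⟩ := ‹Nonempty α›
    have : Nonempty {a' // f a' = f a} := ⟨⟨a, rfl⟩⟩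
    have h1 := Fintype.card_pos (α := {a' // f a' = f a})
    rw [hc] at h1
    omega
  ext b
  rw [PMF.map_apply, PMF.uniformOfFintype_apply, tsum_fintype]
  simp only [PMF.uniformOfFintype_apply]
  rw [← Finset.sum_filter, Finset.sum_const, nsmul_eq_mul]
  have hfilter : (Finset.univ.filter (fun a => b = f a)).card = c := by
    rw [← hc b, Fintype.card_subtype]
    congr 1
    ext a; simp [eq_comm]
  rw [hfilter, hcard]
  push_cast
  rw [ENNReal.mul_inv (by simp [hc0]) (by simp)]
  rw [← mul_assoc, ENNReal.mul_inv_cancel (by simpa using hc0) (by simp), one_mul]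

theorem stmt_8 (n m k : ℕ) (hmn : m ≤ n) (hk : 1 ≤ k) (hk2 : k ≤ 2 ^ n)
    (Y : Type) [Fintype Y] [Nonempty Y] (hY : Fintype.card Y = 2 ^ m)
    (T : GaloisField 2 n → Y)
    (hT : ∀ y : Y, Nat.card {z : GaloisField 2 n // T z = y} = 2 ^ (n - m))
    (x : Fin k → GaloisField 2 n) (hx : Function.Injective x) :
    letI : Fintype (GaloisField 2 n) := Fintype.ofFinite _
    (PMF.uniformOfFintype (Fin k → GaloisField 2 n)).map
        (fun a => fun i : Fin k => T (∑ j : Fin k, a j * x i ^ (j : ℕ)))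
      = PMF.uniformOfFintype (Fin k → Y) := by
  letI instF : Fintype (GaloisField 2 n) := Fintype.ofFinite _
  classical
  have hTcard : ∀ y : Y, Fintype.card {z : GaloisField 2 n // T z = y} = 2 ^ (n - m) := by
    intro y; rw [← Nat.card_eq_fintype_card]; exact hT y
  set e : (Fin k → GaloisField 2 n) → (Fin k → GaloisField 2 n) :=
    fun a i => ∑ j : Fin k, a j * x i ^ (j : ℕ) with he_def
  have he : Function.Bijective e := by
    rw [← Finite.injective_iff_bijective]
    intro a b hab
    have h0 : a - b = 0 := by
      apply Matrix.eq_zero_of_forall_index_sum_mul_pow_eq_zero hx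
      intro i
      have h2 : e a i = e b i := congrFun hab i
      simp only [he_def] at h2
      simp [sub_mul, Finset.sum_sub_distrib, h2]
    exact sub_eq_zero.mp h0
  apply map_unif_of_const_fibers _ ((2 ^ (n - m)) ^ k)
  intro y
  have e1 : {a : Fin k → GaloisField 2 n //
        (fun i => T (∑ j : Fin k, a j * x i ^ (j : ℕ))) = y}
      ≃ {v : Fin k → GaloisField 2 n // (fun i => T (v i)) = y} :=
    (Equiv.ofBijective e he).subtypeEquiv (fun a => by
      constructor
      · intro h; funext i; simpa [he_def] using congrFun h i
      · intro h; funext i; simpa [he_def] using congrFun h i)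
  have e2 : {v : Fin k → GaloisField 2 n // (fun i => T (v i)) = y}
      ≃ ∀ i, {z : GaloisField 2 n // T z = y i} := by
    refine (Equiv.subtypeEquivRight (fun v => ?_)).trans (Equiv.subtypePiEquivPi)
    exact funext_iff
  calc Fintype.card {a : Fin k → GaloisField 2 n //
        (fun i => T (∑ j : Fin k, a j * x i ^ (j : ℕ))) = y}
      = Fintype.card (∀ i, {z : GaloisField 2 n // T z = y i}) :=
        Fintype.card_congr (e1.trans e2)
    _ = ∏ i : Fin k, Fintype.card {z : GaloisField 2 n // T z = y i} := Fintype.card_pi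
    _ = (2 ^ (n - m)) ^ k := by simp [hTcard]
end

section
/- Let n, m, N, q be natural numbers with m ≤ n, 1 ≤ N ≤ 2^m, and N + q ≤ 2^n. Let Y be a finite type with exactly 2^m elements and T : GF(2^n) → Y a balanced function (every fiber has exactly 2^{n−m} elements). Let x₁, …, x_{N+q} be N+q distinct elements of GF(2^n), where x₁, …, x_N are the stored items and x_{N+1}, …, x_{N+q} are the queried items. If db is sampled uniformly at random from GF(2^n)^{N+q}, then the probability that there exists an index i ∈ {1, …, q} with T(p_db(x_{N+i})) ∈ {T(p_db(x₁)), …, T(p_db(x_N))} is at most 1 − (1 − N/2^m)^q. (This is the core probabilistic content of the collision-security theorem for the polynomial recognizer: any fixed set of q phishing queries disjoint from the stored set produces a wrongly recognized item with probability at most 1 − (1 − N/2^m)^q.) -/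
/-!
The coefficient vector `db` is uniform and, since the `x`'s are distinct, the Vandermonde map
`db ↦ (p_db(x₀), …, p_db(x_{N+q-1}))` is a bijection, so the values of `p_db` at the stored and
queried points are independent and uniform. Given the stored values `a`, each queried value must
avoid `T⁻¹(T(a l))` for all `l`, a set of at most `N · |K| / |Y|` points, because `T` is balanced.
Counting the collision-free value vectors gives `|K|^N (|K| - N|K|/|Y|)^q`, i.e. probability at
least `(1 - N/|Y|)^q`.
-/

open Finset
open scoped ENNReal

theorem Matrix.mulVec_vandermonde_bijective {K : Type*} [Field K] {k : ℕ} {x : Fin k → K}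
    (hx : Function.Injective x) : Function.Bijective (Matrix.vandermonde x).mulVec := by
  have hunit : IsUnit (Matrix.vandermonde x) := by
    rw [Matrix.isUnit_iff_isUnit_det, isUnit_iff_ne_zero]
    exact Matrix.det_vandermonde_ne_zero_iff.2 hx
  exact ⟨Matrix.mulVec_injective_iff_isUnit.2 hunit, Matrix.mulVec_surjective_iff_isUnit.2 hunit⟩

theorem Matrix.mulVec_vandermonde_apply {K : Type*} [CommRing K] {k : ℕ} (x db : Fin k → K)
    (i : Fin k) : (Matrix.vandermonde x).mulVec db i = ∑ j : Fin k, db j * x i ^ (j : ℕ) := by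
  simp only [Matrix.mulVec, dotProduct, Matrix.vandermonde_apply, mul_comm]

theorem PMF.toOuterMeasure_uniformOfFintype_preimage {α : Type*} [Fintype α] [Nonempty α]
    {f : α → α} (hf : Function.Bijective f) (s : Set α) :
    (PMF.uniformOfFintype α).toOuterMeasure (f ⁻¹' s) =
      (PMF.uniformOfFintype α).toOuterMeasure s := by
  classical
  have e : ↥(f ⁻¹' s) ≃ ↥s := (Equiv.ofBijective f hf).subtypeEquiv fun _ => Iff.rfl
  rw [PMF.toOuterMeasure_uniformOfFintype_apply, PMF.toOuterMeasure_uniformOfFintype_apply,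
    Fintype.card_congr e]

section Collision

variable {K Y : Type*} (T : K → Y) {k : ℕ}

def collisionSet (N q : ℕ) : Set (Fin (N + q) → K) :=
  {v | ∃ i : Fin q, ∃ l : Fin N, T (v (Fin.natAdd N i)) = T (v (Fin.castAdd q l))}

variable {T} [Finite K]

theorem card_exists_apply_eq_le (hT : ∀ y, Nat.card {z // T z = y} = k) {N : ℕ}
    (a : Fin N → K) : Nat.card {z // ∃ l, T z = T (a l)} ≤ N * k := by
  classical
  have := Fintype.ofFinite K
  have hsub : (univ.filter fun z => ∃ l, T z = T (a l)) =
      univ.biUnion fun l : Fin N => univ.filter fun z => T z = T (a l) := by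
    ext z; simp
  rw [Nat.card_eq_fintype_card, Fintype.card_subtype, hsub]
  refine (card_biUnion_le_card_mul _ _ k fun l _ => ?_).trans_eq (by simp)
  rw [← Fintype.card_subtype, ← Nat.card_eq_fintype_card, hT]

theorem card_forall_apply_ne_ge (hT : ∀ y, Nat.card {z // T z = y} = k) {N : ℕ}
    (a : Fin N → K) : Nat.card K - N * k ≤ Nat.card {z // ∀ l, T z ≠ T (a l)} := by
  classical
  have := Fintype.ofFinite K
  have hit := card_exists_apply_eq_le hT a
  simp only [ne_eq, ← not_exists, Nat.card_eq_fintype_card, Fintype.card_subtype_compl] at hit ⊢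
  omega

theorem card_compl_collisionSet_ge (hT : ∀ y, Nat.card {z // T z = y} = k) (N q : ℕ) :
    Nat.card K ^ N * (Nat.card K - N * k) ^ q ≤ Nat.card ↥(collisionSet T N q)ᶜ := by
  have e : ↥(collisionSet T N q)ᶜ ≃
      Σ a : Fin N → K, Fin q → {z // ∀ l, T z ≠ T (a l)} :=
    ((Fin.appendEquiv N q).symm.subtypeEquiv fun v => by
        simp [collisionSet]).trans
      ((Equiv.subtypeProdEquivSigmaSubtype fun a b => ∀ i l, T (b i) ≠ T (a l)).trans
        (Equiv.sigmaCongrRight fun a =>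
          Equiv.subtypePiEquivPi (p := fun _ z => ∀ l, T z ≠ T (a l))))
  have := Fintype.ofFinite K
  calc Nat.card K ^ N * (Nat.card K - N * k) ^ q
      = ∑ _a : Fin N → K, (Nat.card K - N * k) ^ q := by simp [Nat.card_eq_fintype_card]
    _ ≤ ∑ a : Fin N → K, Nat.card {z // ∀ l, T z ≠ T (a l)} ^ q :=
        sum_le_sum fun a _ => Nat.pow_le_pow_left (card_forall_apply_ne_ge hT a) q
    _ = Nat.card ↥(collisionSet T N q)ᶜ := by simp [Nat.card_congr e, Nat.card_sigma, Nat.card_fun]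

theorem card_eq_card_mul_of_card_fiber [Finite Y] (hT : ∀ y, Nat.card {z // T z = y} = k) :
    Nat.card K = Nat.card Y * k := by
  have := Fintype.ofFinite Y
  rw [← Nat.card_congr (Equiv.sigmaFiberEquiv T), Nat.card_sigma]
  simp [hT, Nat.card_eq_fintype_card]

end Collision

theorem ENNReal.natCast_sub_div_natCast (a b : ℕ) (ha : a ≠ 0) :
    ((a - b : ℕ) : ℝ≥0∞) / a = 1 - (b : ℝ≥0∞) / a := by
  have ha' : (a : ℝ≥0∞) ≠ 0 := by exact_mod_cast ha
  rw [ENNReal.natCast_sub, ENNReal.sub_div fun _ _ => ha', ENNReal.div_self ha' (by simp)]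

theorem ENNReal.div_pow (a b : ℝ≥0∞) (q : ℕ) : (a / b) ^ q = a ^ q / b ^ q := by
  rw [div_eq_mul_inv, mul_pow, ← ENNReal.inv_pow, div_eq_mul_inv]

theorem PMF.toOuterMeasure_uniformOfFintype_collisionSet_le {K Y : Type*} [Fintype K]
    [Nonempty K] [Fintype Y] {T : K → Y} {k : ℕ} (hT : ∀ y, Nat.card {z // T z = y} = k)
    (N q : ℕ) :
    (PMF.uniformOfFintype (Fin (N + q) → K)).toOuterMeasure (collisionSet T N q)
      ≤ 1 - (1 - (N : ℝ≥0∞) / Fintype.card Y) ^ q := by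
  classical
  obtain ⟨c, hc_def⟩ : ∃ c, Nat.card K = c := ⟨_, rfl⟩
  have hc : c = Fintype.card Y * k := by
    rw [← hc_def, card_eq_card_mul_of_card_fiber hT, Nat.card_eq_fintype_card]
  have hc0 : c ≠ 0 := hc_def ▸ Nat.card_ne_zero.2 ⟨inferInstance, inferInstance⟩
  have hk0 : k ≠ 0 := by rintro rfl; simp [hc] at hc0
  have hS : Nat.card ↥(collisionSet T N q) ≤ c ^ (N + q) - c ^ N * (c - N * k) ^ q := by
    have htot := Set.ncard_add_ncard_compl (collisionSet T N q)
    have hgood := card_compl_collisionSet_ge hT N q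
    rw [Nat.card_fun, Nat.card_fin, hc_def] at htot
    rw [Nat.card_coe_set_eq, hc_def] at hgood
    rw [Nat.card_coe_set_eq]
    omega
  have hratio : ((c - N * k : ℕ) : ℝ≥0∞) / c = 1 - (N : ℝ≥0∞) / Fintype.card Y := by
    rw [ENNReal.natCast_sub_div_natCast _ _ hc0, hc, Nat.cast_mul, Nat.cast_mul,
      ENNReal.mul_div_mul_right _ _ (by exact_mod_cast hk0) (by simp)]
  calc (PMF.uniformOfFintype (Fin (N + q) → K)).toOuterMeasure (collisionSet T N q)
      = (Nat.card ↥(collisionSet T N q) : ℝ≥0∞) / (c ^ (N + q) : ℕ) := by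
        rw [PMF.toOuterMeasure_uniformOfFintype_apply]
        simp [← hc_def, Nat.card_eq_fintype_card]
    _ ≤ ((c ^ (N + q) - c ^ N * (c - N * k) ^ q : ℕ) : ℝ≥0∞) / (c ^ (N + q) : ℕ) := by gcongr
    _ = 1 - ((c ^ N * (c - N * k) ^ q : ℕ) : ℝ≥0∞) / (c ^ (N + q) : ℕ) :=
        ENNReal.natCast_sub_div_natCast _ _ (pow_ne_zero _ hc0)
    _ = 1 - (1 - (N : ℝ≥0∞) / Fintype.card Y) ^ q := by
        rw [← hratio, ENNReal.div_pow, pow_add, Nat.cast_mul, Nat.cast_mul]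
        simp only [Nat.cast_pow]
        rw [ENNReal.mul_div_mul_left _ _ (pow_ne_zero _ (by exact_mod_cast hc0)) (by simp)]

theorem stmt_10_general (n m N q : ℕ)
    (Y : Type) [Fintype Y] (hY : Fintype.card Y = 2 ^ m)
    (T : GaloisField 2 n → Y)
    (hT : ∀ y : Y, Nat.card {z : GaloisField 2 n // T z = y} = 2 ^ (n - m))
    (x : Fin (N + q) → GaloisField 2 n) (hx : Function.Injective x) :
    letI : Fintype (GaloisField 2 n) := Fintype.ofFinite _
    (PMF.uniformOfFintype (Fin (N + q) → GaloisField 2 n)).toOuterMeasure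
        {db | ∃ i : Fin q, ∃ l : Fin N,
          T (∑ j : Fin (N + q), db j * x (Fin.natAdd N i) ^ (j : ℕ))
            = T (∑ j : Fin (N + q), db j * x (Fin.castAdd q l) ^ (j : ℕ))}
      ≤ 1 - (1 - (N : ENNReal) / 2 ^ m) ^ q := by
  let : Fintype (GaloisField 2 n) := Fintype.ofFinite _
  have hevent : {db : Fin (N + q) → GaloisField 2 n | ∃ i : Fin q, ∃ l : Fin N,
      T (∑ j : Fin (N + q), db j * x (Fin.natAdd N i) ^ (j : ℕ))
        = T (∑ j : Fin (N + q), db j * x (Fin.castAdd q l) ^ (j : ℕ))} =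
      (Matrix.vandermonde x).mulVec ⁻¹' collisionSet T N q := by
    ext db
    simp only [collisionSet, Set.mem_ofPred_eq, Set.mem_preimage, Matrix.mulVec_vandermonde_apply]
  rw [hevent, PMF.toOuterMeasure_uniformOfFintype_preimage (Matrix.mulVec_vandermonde_bijective hx)]
  simpa [hY] using PMF.toOuterMeasure_uniformOfFintype_collisionSet_le hT N q

theorem stmt_10 (n m N q : ℕ) (hmn : m ≤ n) (hN1 : 1 ≤ N) (hN2 : N ≤ 2 ^ m)
    (hNq : N + q ≤ 2 ^ n)
    (Y : Type) [Fintype Y] (hY : Fintype.card Y = 2 ^ m)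
    (T : GaloisField 2 n → Y)
    (hT : ∀ y : Y, Nat.card {z : GaloisField 2 n // T z = y} = 2 ^ (n - m))
    (x : Fin (N + q) → GaloisField 2 n) (hx : Function.Injective x) :
    letI : Fintype (GaloisField 2 n) := Fintype.ofFinite _
    (PMF.uniformOfFintype (Fin (N + q) → GaloisField 2 n)).toOuterMeasure
        {db | ∃ i : Fin q, ∃ l : Fin N,
          T (∑ j : Fin (N + q), db j * x (Fin.natAdd N i) ^ (j : ℕ))
            = T (∑ j : Fin (N + q), db j * x (Fin.castAdd q l) ^ (j : ℕ))}
      ≤ 1 - (1 - (N : ENNReal) / 2 ^ m) ^ q :=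
  stmt_10_general n m N q Y hY T hT x hx
end
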